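/- For μ, λ ∈ (K*)², the modules V₃(μ) and V₃(λ) are isomorphic as right M₂(α,β)-modules if and only if there exists an integer v with 0 ≤ v ≤ l₂−1 such that μ₁^{l₂} = λ₁^{l₂} and μ₂ = λ₂(α⁻¹β)^{v}. -/

import Mathlib

noncomputable section

open MulOpposite

variable {K : Type*} [Field K]

/-- Defining relations of the two-parameter quantum matrix algebra `M₂(α,β)`.
Generators: `0 ↦ X₁₁`, `1 ↦ X₁₂`, `2 ↦ X₂₁`, `3 ↦ X₂₂`. -/
inductive QMRel (α β : K) : FreeAlgebra K (Fin 4) → FreeAlgebra K (Fin 4) → Prop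
  | r12_11 : QMRel α β (FreeAlgebra.ι K 1 * FreeAlgebra.ι K 0)
      (α • (FreeAlgebra.ι K 0 * FreeAlgebra.ι K 1))
  | r21_11 : QMRel α β (FreeAlgebra.ι K 2 * FreeAlgebra.ι K 0)
      (β • (FreeAlgebra.ι K 0 * FreeAlgebra.ι K 2))
  | r22_21 : QMRel α β (FreeAlgebra.ι K 3 * FreeAlgebra.ι K 2)
      (α • (FreeAlgebra.ι K 2 * FreeAlgebra.ι K 3))
  | r22_12 : QMRel α β (FreeAlgebra.ι K 3 * FreeAlgebra.ι K 1)
      (β • (FreeAlgebra.ι K 1 * FreeAlgebra.ι K 3))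
  | r21_12 : QMRel α β (FreeAlgebra.ι K 2 * FreeAlgebra.ι K 1)
      ((β * α⁻¹) • (FreeAlgebra.ι K 1 * FreeAlgebra.ι K 2))
  | r22_11 : QMRel α β (FreeAlgebra.ι K 3 * FreeAlgebra.ι K 0)
      (FreeAlgebra.ι K 0 * FreeAlgebra.ι K 3 + (β - α⁻¹) • (FreeAlgebra.ι K 1 * FreeAlgebra.ι K 2))

/-- The two-parameter quantum matrix algebra `M₂(α,β)`. -/
abbrev QM (α β : K) : Type _ := RingQuot (QMRel α β)

def X11 (α β : K) : QM α β := RingQuot.mkAlgHom K (QMRel α β) (FreeAlgebra.ι K 0)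
def X12 (α β : K) : QM α β := RingQuot.mkAlgHom K (QMRel α β) (FreeAlgebra.ι K 1)
def X21 (α β : K) : QM α β := RingQuot.mkAlgHom K (QMRel α β) (FreeAlgebra.ι K 2)
def X22 (α β : K) : QM α β := RingQuot.mkAlgHom K (QMRel α β) (FreeAlgebra.ι K 3)

/-- The quantum determinant `D = X₁₁X₂₂ − α⁻¹X₁₂X₂₁`. -/
def Dq (α β : K) : QM α β := X11 α β * X22 α β - α⁻¹ • (X12 α β * X21 α β)

/-- `l₂ := ord(αβ⁻¹)`. -/
def l2 (α β : K) : ℕ := orderOf (α * β⁻¹)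

open Classical in
/-- `l₁ := ord(αβ)` if `ord(β) ∣ ord(αβ)·ord(αβ⁻¹)`, and `l₁ := 2·ord(αβ)` otherwise. -/
def l1 (α β : K) : ℕ :=
  if orderOf β ∣ orderOf (α * β) * orderOf (α * β⁻¹) then orderOf (α * β)
  else 2 * orderOf (α * β)

/-- The underlying vector space of the modules `V₁(μ)` and `V₂(μ)`. -/
abbrev V12 (α β : K) : Type _ := (ZMod (l1 α β) × ZMod (l2 α β)) → K

/-- The underlying vector space of the module `V₃(μ)`. -/
abbrev V3 (α β : K) : Type _ := (ZMod (orderOf (α * β)) × ZMod (l2 α β)) → K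

/-- The basis vectors `e(a,b)` of `V₁(μ)` and `V₂(μ)`. -/
def e12 (α β : K) (a : ZMod (l1 α β)) (b : ZMod (l2 α β)) : V12 α β := Pi.single (a, b) 1

/-- The basis vectors `e(a,b)` of `V₃(μ)`. -/
def e3 (α β : K) (a : ZMod (orderOf (α * β))) (b : ZMod (l2 α β)) : V3 α β := Pi.single (a, b) 1

/-- `ρ` is the representation of `M₂(α,β)` on `V₁(μ₁,μ₂,μ₃,μ₄)` (a right module,
presented as a `K`-algebra map from the opposite algebra to endomorphisms),
given on the basis `e(a,b)`, `0 ≤ a ≤ l₁−1`, `0 ≤ b ≤ l₂−1`, by the formulas: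
`e(a,b)X₁₁ = μ₁β^b e(a⊕1,b)`;
`e(a,b)X₁₂ = μ₂⁻¹μ₃(α⁻¹β)^b(αβ)^{−a} e(a,b−1)` if `b ≠ 0`,
  `e(a,0)X₁₂ = μ₂⁻¹μ₃β^{al₂}(αβ)^{−a} e(a,l₂−1)`;
`e(a,b)X₂₁ = μ₂ e(a,b+1)` if `b ≠ l₂−1`, `e(a,l₂−1)X₂₁ = μ₂β^{−al₂} e(a,0)`;
`e(a,b)X₂₂ = μ₁⁻¹α^{−b}(μ₄ + β(αβ)^{−a}μ₃) e(a⊖1,b)`,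
with index arithmetic modulo `l₁` (first slot) and `l₂` (second slot). -/
def IsV1Rep (α β μ₁ μ₂ μ₃ μ₄ : K)
    (ρ : (QM α β)ᵐᵒᵖ →ₐ[K] Module.End K (V12 α β)) : Prop :=
  (∀ a b, ρ (op (X11 α β)) (e12 α β a b) = (μ₁ * β ^ b.val) • e12 α β (a + 1) b) ∧
  (∀ a b, ρ (op (X12 α β)) (e12 α β a b) =
    (if b = 0 then μ₂⁻¹ * μ₃ * β ^ (a.val * l2 α β) * ((α * β) ^ a.val)⁻¹
      else μ₂⁻¹ * μ₃ * (α⁻¹ * β) ^ b.val * ((α * β) ^ a.val)⁻¹) • e12 α β a (b - 1)) ∧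
  (∀ a b, ρ (op (X21 α β)) (e12 α β a b) =
    (if b.val = l2 α β - 1 then μ₂ * (β ^ (a.val * l2 α β))⁻¹ else μ₂) • e12 α β a (b + 1)) ∧
  (∀ a b, ρ (op (X22 α β)) (e12 α β a b) =
    (μ₁⁻¹ * (α ^ b.val)⁻¹ * (μ₄ + β * ((α * β) ^ a.val)⁻¹ * μ₃)) • e12 α β (a - 1) b)

/-- `ρ` is the representation of `M₂(α,β)` on `V₂(μ₁,μ₂,μ₃)` given on the basis
`e(a,b)` by:
`e(a,b)X₁₁ = μ₁⁻¹μ₃α⁻¹(α⁻¹β)^b((αβ)^a − 1) e(a−1,b)` if `a ≠ 0`, `e(0,b)X₁₁ = 0`;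
`e(a,b)X₁₂ = μ₂⁻¹μ₃β^a(α⁻¹β)^b e(a,b∔(−1))`;
`e(a,b)X₂₁ = μ₂α^a e(a,b∔1)`;
`e(a,b)X₂₂ = μ₁ e(a+1,b)` if `a ≠ l₁−1`, `e(l₁−1,b)X₂₂ = μ₁α^{−bl₁} e(0,b)`. -/
def IsV2Rep (α β μ₁ μ₂ μ₃ : K)
    (ρ : (QM α β)ᵐᵒᵖ →ₐ[K] Module.End K (V12 α β)) : Prop :=
  (∀ a b, ρ (op (X11 α β)) (e12 α β a b) =
    (if a = 0 then 0
      else μ₁⁻¹ * μ₃ * α⁻¹ * (α⁻¹ * β) ^ b.val * ((α * β) ^ a.val - 1)) • e12 α β (a - 1) b) ∧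
  (∀ a b, ρ (op (X12 α β)) (e12 α β a b) =
    (μ₂⁻¹ * μ₃ * β ^ a.val * (α⁻¹ * β) ^ b.val) • e12 α β a (b - 1)) ∧
  (∀ a b, ρ (op (X21 α β)) (e12 α β a b) = (μ₂ * α ^ a.val) • e12 α β a (b + 1)) ∧
  (∀ a b, ρ (op (X22 α β)) (e12 α β a b) =
    (if a.val = l1 α β - 1 then μ₁ * (α ^ (b.val * l1 α β))⁻¹ else μ₁) • e12 α β (a + 1) b)

/-- `ρ` is the representation of `M₂(α,β)` on `V₃(μ₁,μ₂)` given on the basis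
`e(a,b)`, `0 ≤ a ≤ ord(αβ)−1`, `0 ≤ b ≤ l₂−1`, by:
`e(a,b)X₁₁ = μ₂α⁻¹(α⁻¹β)^b((αβ)^a − 1) e(a−1,b)` if `a ≠ 0`, `e(0,b)X₁₁ = 0`;
`e(a,b)X₁₂ = μ₁⁻¹μ₂β^a(α⁻¹β)^b e(a,b∔(−1))`;
`e(a,b)X₂₁ = μ₁α^a e(a,b∔1)`;
`e(a,b)X₂₂ = e(a+1,b)` if `a ≠ ord(αβ)−1`, `e(ord(αβ)−1,b)X₂₂ = 0`. -/
def IsV3Rep (α β μ₁ μ₂ : K)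
    (ρ : (QM α β)ᵐᵒᵖ →ₐ[K] Module.End K (V3 α β)) : Prop :=
  (∀ a b, ρ (op (X11 α β)) (e3 α β a b) =
    (if a = 0 then 0
      else μ₂ * α⁻¹ * (α⁻¹ * β) ^ b.val * ((α * β) ^ a.val - 1)) • e3 α β (a - 1) b) ∧
  (∀ a b, ρ (op (X12 α β)) (e3 α β a b) =
    (μ₁⁻¹ * μ₂ * β ^ a.val * (α⁻¹ * β) ^ b.val) • e3 α β a (b - 1)) ∧
  (∀ a b, ρ (op (X21 α β)) (e3 α β a b) = (μ₁ * α ^ a.val) • e3 α β a (b + 1)) ∧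
  (∀ a b, ρ (op (X22 α β)) (e3 α β a b) =
    if a.val = orderOf (α * β) - 1 then 0 else e3 α β (a + 1) b)

/-! For an isomorphism `f : V₃(μ) → V₃(ν)` consider `u = f(e(0,0))`. Since
`e(0,0)X₁₁ = 0` and a vector killed by `X₁₁` is supported on the row `a = 0`, so is `u`. The elements
`X₁₂X₂₁` and `X₂₁^{l₂}` act diagonally, on `e(0,b)` by `ν₂(α⁻¹β)^b` and `ν₁^{l₂}` in `V₃(ν)` and
on `e(0,0)` by `μ₂` and `μ₁^{l₂}` in `V₃(μ)`; comparing at any `b` with `u(0,b) ≠ 0` gives the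
two conditions. Conversely, with `t = ν₁/μ₁` (so `t^{l₂} = 1`) the monomial map
`e(a,b) ↦ t^b e(a,b+v)` intertwines the four generators, hence the whole algebra. -/

section PowZModVal

variable {M : Type*} [Monoid M] {t : M} {n : ℕ}

theorem pow_zmod_val_add [NeZero n] (ht : t ^ n = 1) (x y : ZMod n) :
    t ^ (x + y).val = t ^ x.val * t ^ y.val := by
  rw [ZMod.val_add, ← pow_eq_pow_mod _ ht, pow_add]

theorem pow_zmod_val_natCast (ht : t ^ n = 1) (k : ℕ) : t ^ (k : ZMod n).val = t ^ k := by
  rw [ZMod.val_natCast, ← pow_eq_pow_mod _ ht]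

theorem pow_zmod_val_add_one [NeZero n] (ht : t ^ n = 1) (x : ZMod n) :
    t ^ (x + 1).val = t ^ x.val * t := by
  rw [pow_zmod_val_add ht, ← Nat.cast_one, pow_zmod_val_natCast ht, pow_one]

theorem pow_zmod_val_sub_one_mul [NeZero n] (ht : t ^ n = 1) (x : ZMod n) :
    t ^ (x - 1).val * t = t ^ x.val := by
  rw [← pow_zmod_val_add_one ht, sub_add_cancel]

end PowZModVal

theorem orderOf_mul_pos {G : Type*} [CommMonoid G] {x y : G} (hx : 0 < orderOf x)
    (hy : 0 < orderOf y) : 0 < orderOf (x * y) :=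
  orderOf_pos_iff.mpr ((orderOf_pos_iff.mp hx).mul (orderOf_pos_iff.mp hy))

section MonomialMaps

variable {R I : Type*}

theorem apply_apply_eq_mul_of_map_single [CommSemiring R] [Fintype I] [DecidableEq I]
    (T : (I → R) →ₗ[R] (I → R)) {σ : I → I} (hσ : σ.Injective) {c : I → R}
    (hT : ∀ p, T (Pi.single p 1) = c p • Pi.single (σ p) 1) (w : I → R) (p : I) :
    T w (σ p) = c p * w p := by
  conv_lhs => rw [← (Pi.basisFun R I).sum_repr w]
  simp [hT, Pi.single_apply, hσ.eq_iff, mul_comm]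

theorem map_single_of_apply_eq_mul [Semiring R] [DecidableEq I] (T : (I → R) →ₗ[R] (I → R))
    {d : I → R} (hT : ∀ w p, T w p = d p * w p) (q : I) :
    T (Pi.single q 1) = d q • Pi.single q 1 := by
  ext p
  rw [hT]
  by_cases hp : p = q <;> simp [hp]

theorem exists_linearEquiv_map_single [CommRing R] [Fintype I] [DecidableEq I] (σ : I ≃ I)
    {c : I → R} (hc : ∀ p, IsUnit (c p)) :
    ∃ f : (I → R) ≃ₗ[R] (I → R), ∀ p, f (Pi.single p 1) = c p • Pi.single (σ p) 1 := by
  let b := Pi.basisFun R I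
  have hunit : ∀ p, IsUnit (c (σ.symm p)) := fun p => hc _
  refine ⟨b.equiv (b.isUnitSMul hunit) σ, fun p => ?_⟩
  simpa [b, Module.Basis.isUnitSMul_apply] using b.equiv_apply p (b.isUnitSMul hunit) σ

theorem eq_of_intertwines_diagonal [CommRing R] [IsDomain R] {N : Type*} [AddCommGroup N]
    [Module R N] (f : N →ₗ[R] (I → R)) {T : N →ₗ[R] N} {S : (I → R) →ₗ[R] (I → R)}
    (hf : ∀ w, f (T w) = S (f w)) {v : N} {c : R} (hv : T v = c • v) {d : I → R}
    (hS : ∀ w p, S w p = d p * w p) {p : I} (hp : f v p ≠ 0) : c = d p := by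
  have h := congrFun (hf v) p
  rw [hv, map_smul, hS, Pi.smul_apply, smul_eq_mul] at h
  exact mul_right_cancel₀ hp h

end MonomialMaps

theorem intertwines_of_intertwines_generators {R X M N : Type*} [CommRing R]
    [AddCommGroup M] [Module R M] [AddCommGroup N] [Module R N]
    {r : FreeAlgebra R X → FreeAlgebra R X → Prop}
    (ρ : (RingQuot r)ᵐᵒᵖ →ₐ[R] Module.End R M) (ρ' : (RingQuot r)ᵐᵒᵖ →ₐ[R] Module.End R N)
    (f : M →ₗ[R] N)
    (h : ∀ i, f ∘ₗ ρ (op (RingQuot.mkAlgHom R r (FreeAlgebra.ι R i))) =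
      ρ' (op (RingQuot.mkAlgHom R r (FreeAlgebra.ι R i))) ∘ₗ f)
    (x : RingQuot r) (w : M) : f (ρ (op x) w) = ρ' (op x) (f w) := by
  obtain ⟨y, rfl⟩ := RingQuot.mkAlgHom_surjective R r x
  induction y using FreeAlgebra.induction generalizing w with
  | grade0 c => simp [← MulOpposite.algebraMap_apply]
  | grade1 i => exact LinearMap.congr_fun (h i) w
  | mul y z hy hz => simp only [map_mul, op_mul, Module.End.mul_apply, hy, hz]
  | add y z hy hz => simp only [map_add, op_add, LinearMap.add_apply, hy, hz]

section Parameters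

variable {α β : K}

theorem l2_pos (hoα : 0 < orderOf α) (hoβ : 0 < orderOf β) : 0 < l2 α β := by
  refine orderOf_mul_pos hoα (orderOf_pos_iff.mpr (isOfFinOrder_iff_pow_eq_one.mpr ?_))
  exact ⟨orderOf β, hoβ, by rw [inv_pow, pow_orderOf_eq_one, inv_one]⟩

theorem inv_mul_pow_l2 : (α⁻¹ * β) ^ l2 α β = 1 := by
  rw [show α⁻¹ * β = (α * β⁻¹)⁻¹ by rw [mul_inv, inv_inv], inv_pow, l2, pow_orderOf_eq_one,
    inv_one]

end Parameters

namespace IsV3Rep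

variable {α β μ₁ μ₂ : K} {ρ : (QM α β)ᵐᵒᵖ →ₐ[K] Module.End K (V3 α β)}
  [NeZero (orderOf (α * β))] [NeZero (l2 α β)]

theorem X11_apply (hρ : IsV3Rep α β μ₁ μ₂ ρ) (w : V3 α β) (a : ZMod (orderOf (α * β)))
    (b : ZMod (l2 α β)) :
    ρ (op (X11 α β)) w (a - 1, b) =
      (if a = 0 then 0 else μ₂ * α⁻¹ * (α⁻¹ * β) ^ b.val * ((α * β) ^ a.val - 1)) * w (a, b) :=
  apply_apply_eq_mul_of_map_single _ ((sub_left_injective (b := 1)).prodMap Function.injective_id)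
    (fun p => hρ.1 p.1 p.2) w (a, b)

theorem X12_apply (hρ : IsV3Rep α β μ₁ μ₂ ρ) (w : V3 α β) (a : ZMod (orderOf (α * β)))
    (b : ZMod (l2 α β)) :
    ρ (op (X12 α β)) w (a, b - 1) = μ₁⁻¹ * μ₂ * β ^ a.val * (α⁻¹ * β) ^ b.val * w (a, b) :=
  apply_apply_eq_mul_of_map_single _ (Function.injective_id.prodMap (sub_left_injective (b := 1)))
    (fun p => hρ.2.1 p.1 p.2) w (a, b)

theorem X21_apply (hρ : IsV3Rep α β μ₁ μ₂ ρ) (w : V3 α β) (a : ZMod (orderOf (α * β)))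
    (b : ZMod (l2 α β)) :
    ρ (op (X21 α β)) w (a, b + 1) = μ₁ * α ^ a.val * w (a, b) :=
  apply_apply_eq_mul_of_map_single _ (Function.injective_id.prodMap (add_left_injective 1))
    (fun p => hρ.2.2.1 p.1 p.2) w (a, b)

theorem X12_X21_apply (hρ : IsV3Rep α β μ₁ μ₂ ρ) (hμ₁ : μ₁ ≠ 0) (w : V3 α β)
    (p : ZMod (orderOf (α * β)) × ZMod (l2 α β)) :
    ρ (op (X12 α β * X21 α β)) w p = μ₂ * (α * β) ^ p.1.val * (α⁻¹ * β) ^ p.2.val * w p := by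
  obtain ⟨a, b⟩ := p
  have h := hρ.X21_apply (ρ (op (X12 α β)) w) a (b - 1)
  rw [sub_add_cancel, hρ.X12_apply] at h
  rw [op_mul, map_mul, Module.End.mul_apply, h]
  field_simp
  ring

theorem X21_pow_apply (hρ : IsV3Rep α β μ₁ μ₂ ρ) (k : ℕ) (w : V3 α β)
    (a : ZMod (orderOf (α * β))) (b : ZMod (l2 α β)) :
    ρ (op (X21 α β ^ k)) w (a, b + k) = (μ₁ * α ^ a.val) ^ k * w (a, b) := by
  induction k with
  | zero => simp
  | succ k ih =>
    rw [pow_succ, op_mul, map_mul, Module.End.mul_apply, Nat.cast_succ, ← add_assoc,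
      hρ.X21_apply, ih, pow_succ]
    ring

theorem X21_pow_l2_apply (hρ : IsV3Rep α β μ₁ μ₂ ρ) (w : V3 α β)
    (p : ZMod (orderOf (α * β)) × ZMod (l2 α β)) :
    ρ (op (X21 α β ^ l2 α β)) w p = (μ₁ * α ^ p.1.val) ^ l2 α β * w p := by
  simpa using hρ.X21_pow_apply (l2 α β) w p.1 p.2

theorem apply_eq_zero_of_X11 (hρ : IsV3Rep α β μ₁ μ₂ ρ) (hα : α ≠ 0) (hβ : β ≠ 0)
    (hμ₂ : μ₂ ≠ 0) {w : V3 α β} (hw : ρ (op (X11 α β)) w = 0) {a : ZMod (orderOf (α * β))}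
    (ha : a ≠ 0) (b : ZMod (l2 α β)) : w (a, b) = 0 := by
  have h := hρ.X11_apply w a b
  rw [hw, Pi.zero_apply, if_neg ha, eq_comm] at h
  have hpow : (α * β) ^ a.val - 1 ≠ 0 :=
    sub_ne_zero.mpr (pow_ne_one_of_lt_orderOf ((ZMod.val_ne_zero a).mpr ha) (ZMod.val_lt a))
  refine (mul_eq_zero.mp h).resolve_left ?_
  positivity

end IsV3Rep

section Isomorphism

variable {α β μ₁ μ₂ ν₁ ν₂ : K} {ρμ ρν : (QM α β)ᵐᵒᵖ →ₐ[K] Module.End K (V3 α β)}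
  [NeZero (orderOf (α * β))] [NeZero (l2 α β)]

theorem exists_of_intertwiner (hα : α ≠ 0) (hβ : β ≠ 0) (hμ₁ : μ₁ ≠ 0) (hν₁ : ν₁ ≠ 0)
    (hν₂ : ν₂ ≠ 0) (hρμ : IsV3Rep α β μ₁ μ₂ ρμ) (hρν : IsV3Rep α β ν₁ ν₂ ρν)
    (f : V3 α β ≃ₗ[K] V3 α β)
    (hf : ∀ (x : QM α β) (w : V3 α β), f (ρμ (op x) w) = ρν (op x) (f w)) :
    ∃ b : ZMod (l2 α β), μ₁ ^ l2 α β = ν₁ ^ l2 α β ∧ μ₂ = ν₂ * (α⁻¹ * β) ^ b.val := by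
  have hu : f (e3 α β 0 0) ≠ 0 := f.map_ne_zero_iff.mpr (by simp [e3])
  obtain ⟨⟨a, b⟩, hab⟩ := Function.ne_iff.mp hu
  obtain rfl : a = 0 := by
    by_contra ha
    refine hab (hρν.apply_eq_zero_of_X11 hα hβ hν₂ ?_ ha b)
    rw [← hf, hρμ.1, if_pos rfl, zero_smul, map_zero]
  have eigenvalue_eq : ∀ (x : QM α β) {c : K} {d : V3 α β},
      ρμ (op x) (e3 α β 0 0) = c • e3 α β 0 0 → (∀ w p, ρν (op x) w p = d p * w p) →
        c = d (0, b) :=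
    fun x _ _ hv hS => eq_of_intertwines_diagonal f.toLinearMap (hf x) hv hS hab
  refine ⟨b, ?_, ?_⟩
  · simpa using eigenvalue_eq _
      (map_single_of_apply_eq_mul _ hρμ.X21_pow_l2_apply _) hρν.X21_pow_l2_apply
  · simpa using eigenvalue_eq _
      (map_single_of_apply_eq_mul _ (hρμ.X12_X21_apply hμ₁) _) (hρν.X12_X21_apply hν₁)

theorem exists_intertwiner (hμ₁ : μ₁ ≠ 0) (hν₁ : ν₁ ≠ 0) (hρμ : IsV3Rep α β μ₁ μ₂ ρμ)
    (hρν : IsV3Rep α β ν₁ ν₂ ρν) {v : ℕ} (h₁ : μ₁ ^ l2 α β = ν₁ ^ l2 α β)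
    (h₂ : μ₂ = ν₂ * (α⁻¹ * β) ^ v) :
    ∃ f : V3 α β ≃ₗ[K] V3 α β,
      ∀ (x : QM α β) (w : V3 α β), f (ρμ (op x) w) = ρν (op x) (f w) := by
  set t := ν₁ * μ₁⁻¹
  have ht : t ^ l2 α β = 1 := by
    rw [mul_pow, inv_pow, ← h₁, mul_inv_cancel₀ (pow_ne_zero _ hμ₁)]
  have hγ (b : ZMod (l2 α β)) :
      (α⁻¹ * β) ^ (b + v).val = (α⁻¹ * β) ^ b.val * (α⁻¹ * β) ^ v := by
    rw [pow_zmod_val_add inv_mul_pow_l2, pow_zmod_val_natCast inv_mul_pow_l2]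
  obtain ⟨f, hf⟩ := exists_linearEquiv_map_single
    ((Equiv.refl (ZMod (orderOf (α * β)))).prodCongr (Equiv.addRight (v : ZMod (l2 α β))))
    (c := fun p => t ^ p.2.val) fun _ => (pow_ne_zero _ (by simp [t, hμ₁, hν₁])).isUnit
  have hfe (a b) : f (e3 α β a b) = t ^ b.val • e3 α β a (b + v) := hf (a, b)
  have h11 (a b) :
      f (ρμ (op (X11 α β)) (e3 α β a b)) = ρν (op (X11 α β)) (f (e3 α β a b)) := by
    rw [hρμ.1, map_smul, hfe, hfe, map_smul, hρν.1, smul_smul, smul_smul]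
    congr 1
    split_ifs
    · ring
    · rw [hγ, h₂]; ring
  have h12 (a b) :
      f (ρμ (op (X12 α β)) (e3 α β a b)) = ρν (op (X12 α β)) (f (e3 α β a b)) := by
    rw [hρμ.2.1, map_smul, hfe, hfe, map_smul, hρν.2.1, smul_smul, smul_smul,
      sub_add_eq_add_sub]
    congr 1
    rw [hγ, h₂, ← pow_zmod_val_sub_one_mul ht b]
    simp only [t]
    field_simp
  have h21 (a b) :
      f (ρμ (op (X21 α β)) (e3 α β a b)) = ρν (op (X21 α β)) (f (e3 α β a b)) := by
    rw [hρμ.2.2.1, map_smul, hfe, hfe, map_smul, hρν.2.2.1, smul_smul, smul_smul,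
      add_right_comm]
    congr 1
    rw [pow_zmod_val_add_one ht b]
    simp only [t]
    field_simp
  have h22 (a b) :
      f (ρμ (op (X22 α β)) (e3 α β a b)) = ρν (op (X22 α β)) (f (e3 α β a b)) := by
    rw [hρμ.2.2.2, hfe, map_smul, hρν.2.2.2]
    split_ifs
    · simp
    · rw [hfe]
  refine ⟨f, intertwines_of_intertwines_generators ρμ ρν f.toLinearMap fun i =>
    (Pi.basisFun K _).ext fun ⟨a, b⟩ => ?_⟩
  rw [Pi.basisFun_apply]
  fin_cases i
  · exact h11 a b
  · exact h12 a b
  · exact h21 a b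
  · exact h22 a b

end Isomorphism

theorem stmt19_general (α β : K)
    (hα : α ≠ 0) (hβ : β ≠ 0) (hoα : 0 < orderOf α) (hoβ : 0 < orderOf β)
    (μ₁ μ₂ ν₁ ν₂ : K)
    (hμ₁ : μ₁ ≠ 0) (hν₁ : ν₁ ≠ 0) (hν₂ : ν₂ ≠ 0)
    (ρμ ρν : (QM α β)ᵐᵒᵖ →ₐ[K] Module.End K (V3 α β))
    (hρμ : IsV3Rep α β μ₁ μ₂ ρμ) (hρν : IsV3Rep α β ν₁ ν₂ ρν) :
    (∃ f : V3 α β ≃ₗ[K] V3 α β,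
        ∀ (x : QM α β) (w : V3 α β), f (ρμ (op x) w) = ρν (op x) (f w)) ↔
    ∃ v : ℕ, v ≤ l2 α β - 1 ∧
      μ₁ ^ l2 α β = ν₁ ^ l2 α β ∧
      μ₂ = ν₂ * (α⁻¹ * β) ^ v := by
  have : NeZero (orderOf (α * β)) := ⟨(orderOf_mul_pos hoα hoβ).ne'⟩
  have : NeZero (l2 α β) := ⟨(l2_pos hoα hoβ).ne'⟩
  constructor
  · rintro ⟨f, hf⟩
    obtain ⟨b, h₁, h₂⟩ := exists_of_intertwiner hα hβ hμ₁ hν₁ hν₂ hρμ hρν f hf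
    exact ⟨b.val, Nat.le_sub_one_of_lt (ZMod.val_lt b), h₁, h₂⟩
  · rintro ⟨v, -, h₁, h₂⟩
    exact exists_intertwiner hμ₁ hν₁ hρμ hρν h₁ h₂

/-- Theorem 7.3 of the paper. For `μ, ν ∈ (K*)²`, the modules
`V₃(μ)` and `V₃(ν)` are isomorphic as right `M₂(α,β)`-modules iff there exists
`0 ≤ v ≤ l₂−1` with `μ₁^{l₂} = ν₁^{l₂}` and `μ₂ = ν₂(α⁻¹β)^v`. -/
theorem stmt19 [IsAlgClosed K] (α β : K)
    (hα : α ≠ 0) (hβ : β ≠ 0) (hoα : 0 < orderOf α) (hoβ : 0 < orderOf β)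
    (hab : α * β ≠ 1)
    (μ₁ μ₂ ν₁ ν₂ : K)
    (hμ₁ : μ₁ ≠ 0) (hμ₂ : μ₂ ≠ 0) (hν₁ : ν₁ ≠ 0) (hν₂ : ν₂ ≠ 0)
    (ρμ ρν : (QM α β)ᵐᵒᵖ →ₐ[K] Module.End K (V3 α β))
    (hρμ : IsV3Rep α β μ₁ μ₂ ρμ) (hρν : IsV3Rep α β ν₁ ν₂ ρν) :
    (∃ f : V3 α β ≃ₗ[K] V3 α β,
        ∀ (x : QM α β) (w : V3 α β), f (ρμ (op x) w) = ρν (op x) (f w)) ↔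
    ∃ v : ℕ, v ≤ l2 α β - 1 ∧
      μ₁ ^ l2 α β = ν₁ ^ l2 α β ∧
      μ₂ = ν₂ * (α⁻¹ * β) ^ v :=
  stmt19_general α β hα hβ hoα hoβ μ₁ μ₂ ν₁ ν₂ hμ₁ hν₁ hν₂ ρμ ρν hρμ hρν
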